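/- For the complete bipartite graphs K_{1,t} (the star) and K_{2,t} with t ≥ 1 the partition polynomial satisfies Q(K_{1,t}, x) = x·(1+x)^t and Q(K_{2,t}, x) = x·[(1+x)^t − x^t] + x^2·[(2+x)^t − x^t] + x^{2+t}. -/

import Mathlib

open Finset

variable {V : Type*} [Fintype V] [DecidableEq V]

/-- `P` is a set partition of the vertex set `V`, given as a finset of (nonempty,
pairwise disjoint, covering) blocks. -/
def IsPartition (P : Finset (Finset V)) : Prop :=
  ∅ ∉ P ∧ ∀ v : V, ∃! B : Finset V, B ∈ P ∧ v ∈ B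

/-- `P` is a connected set partition of `G`: every block induces a connected subgraph. -/
def IsConnPartition (G : SimpleGraph V) (P : Finset (Finset V)) : Prop :=
  IsPartition P ∧ ∀ B ∈ P, (G.induce (B : Set V)).Connected

open scoped Classical in
/-- The finset of all connected set partitions (`Π_c(G)`). -/
noncomputable def connParts (G : SimpleGraph V) : Finset (Finset (Finset V)) :=
  Finset.univ.filter (IsConnPartition G)

open scoped Classical in
/-- The partition polynomial `Q(G,x) = Σ_{π ∈ Π_c(G)} x^{|π|}`, evaluated at `x : ℤ`. -/
noncomputable def Q (G : SimpleGraph V) (x : ℤ) : ℤ :=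
  ∑ P ∈ connParts G, x ^ P.card

/-!
Right vertices of `K_{m,t}` are pairwise non-adjacent, so a connected block is either a single
right vertex or contains a left vertex. Once the grouping of the left vertices is fixed (as the
fibres of a surjection `c : α → κ`), a connected partition amounts to sending each right vertex
to one of the `|κ|` left groups or leaving it alone, subject only to every group of two or more
left vertices receiving some right vertex. Such a partition has `|κ| + #(alone)` blocks, so
summing over all assignments `g : β → Option κ` gives `x ^ |κ| * (x + |κ|) ^ |β|` before
removing the forbidden ones. For `K_{2,t}` the two left vertices are either apart (`κ = Fin 2`,
nothing forbidden) or together (`κ = Unit`, only the all-alone assignment is forbidden).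
-/

open SimpleGraph Function

section Partitions

variable {U : Type*} {P : Finset (Finset U)}

def SameBlock (P : Finset (Finset U)) (v w : U) : Prop :=
  ∃ B ∈ P, v ∈ B ∧ w ∈ B

theorem SameBlock.symm {v w : U} (h : SameBlock P v w) : SameBlock P w v :=
  let ⟨B, hB, hv, hw⟩ := h
  ⟨B, hB, hw, hv⟩

theorem IsPartition.mem_iff_sameBlock (hP : IsPartition P) {B : Finset U} (hB : B ∈ P)
    {v w : U} (hv : v ∈ B) : w ∈ B ↔ SameBlock P v w := by
  refine ⟨fun hw => ⟨B, hB, hv, hw⟩, ?_⟩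
  rintro ⟨C, hC, hvC, hwC⟩
  obtain ⟨D, -, hD⟩ := hP.2 v
  rwa [hD B ⟨hB, hv⟩, ← hD C ⟨hC, hvC⟩]

theorem IsPartition.sameBlock_refl (hP : IsPartition P) (v : U) : SameBlock P v v :=
  let ⟨B, ⟨hB, hv⟩, _⟩ := hP.2 v
  ⟨B, hB, hv, hv⟩

theorem IsPartition.sameBlock_trans (hP : IsPartition P) {u v w : U} (huv : SameBlock P u v)
    (hvw : SameBlock P v w) : SameBlock P u w :=
  let ⟨B, hB, hu, hv⟩ := huv
  ⟨B, hB, hu, (hP.mem_iff_sameBlock hB hv).2 hvw⟩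

theorem IsPartition.subset_of_sameBlock_iff (hP : IsPartition P) {P' : Finset (Finset U)}
    (hP' : IsPartition P') (h : ∀ v w, SameBlock P v w ↔ SameBlock P' v w) : P ⊆ P' := by
  intro B hB
  obtain ⟨v, hv⟩ := nonempty_iff_ne_empty.2 (ne_of_mem_of_not_mem hB hP.1)
  obtain ⟨B', ⟨hB', hvB'⟩, -⟩ := hP'.2 v
  convert hB' using 1
  ext w
  rw [hP.mem_iff_sameBlock hB hv, hP'.mem_iff_sameBlock hB' hvB', h]

theorem IsPartition.ext_of_sameBlock_iff (hP : IsPartition P) {P' : Finset (Finset U)}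
    (hP' : IsPartition P') (h : ∀ v w, SameBlock P v w ↔ SameBlock P' v w) : P = P' :=
  (hP.subset_of_sameBlock_iff hP' h).antisymm
    (hP'.subset_of_sameBlock_iff hP fun v w => (h v w).symm)

end Partitions

section Fibers

variable {L : Type*} [DecidableEq L] (ℓ : V → L)

def fibers : Finset (Finset V) :=
  univ.image fun v => univ.filter fun w => ℓ w = ℓ v

theorem sameBlock_fibers {v w : V} : SameBlock (fibers ℓ) v w ↔ ℓ v = ℓ w := by
  simp only [SameBlock, fibers, mem_image, mem_univ, true_and, exists_exists_eq_and, mem_filter]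
  exact ⟨fun ⟨u, hv, hw⟩ => hv.trans hw.symm, fun h => ⟨v, rfl, h.symm⟩⟩

theorem isPartition_fibers : IsPartition (fibers ℓ) := by
  refine ⟨?_, fun v =>
    ⟨univ.filter fun w => ℓ w = ℓ v, ⟨mem_image_of_mem _ (mem_univ v), by simp⟩, ?_⟩⟩
  · simp only [fibers, mem_image, mem_univ, true_and, not_exists]
    intro v h
    simpa using (Finset.ext_iff.1 h v).1
  · rintro B ⟨hB, hv⟩
    obtain ⟨u, -, rfl⟩ := mem_image.1 hB
    ext w
    simp only [mem_filter, mem_univ, true_and] at hv ⊢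
    rw [hv]

theorem card_fibers : (fibers ℓ).card = (univ.image ℓ).card := by
  have : fibers ℓ = (univ.image ℓ).image fun y => univ.filter fun w => ℓ w = y := by
    rw [image_image]; rfl
  rw [this]
  refine card_image_of_injOn ?_
  rintro _ hy _ - h
  obtain ⟨v, -, rfl⟩ := mem_image.1 (mem_coe.1 hy)
  simpa using (Finset.ext_iff.1 h v).1 (by simp)

theorem IsPartition.eq_fibers {P : Finset (Finset V)} (hP : IsPartition P)
    (h : ∀ v w, SameBlock P v w ↔ ℓ v = ℓ w) : P = fibers ℓ :=
  hP.ext_of_sameBlock_iff (isPartition_fibers ℓ) fun v w => by rw [h, sameBlock_fibers]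

end Fibers

theorem mem_connParts {W : Type*} [Fintype W] {G : SimpleGraph W} {P : Finset (Finset W)} :
    P ∈ connParts G ↔ IsConnPartition G P := by
  simp [connParts]

theorem exists_adj_of_connected_induce {W : Type*} {G : SimpleGraph W} {s : Set W}
    (hs : (G.induce s).Connected) {v w : W} (hv : v ∈ s) (hw : w ∈ s) (hvw : v ≠ w) :
    ∃ u ∈ s, G.Adj v u := by
  have : Nontrivial s := ⟨⟨v, hv⟩, ⟨w, hw⟩, by simpa⟩
  obtain ⟨⟨u, hu⟩, huv⟩ := hs.preconnected.exists_adj_of_nontrivial ⟨v, hv⟩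
  exact ⟨u, hu, huv⟩

theorem connected_induce_of_hub {W : Type*} {G : SimpleGraph W} {s : Set W} {h : W} (hh : h ∈ s)
    (hr : ∀ v ∈ s, v = h ∨ G.Adj h v ∨ ∃ u ∈ s, G.Adj h u ∧ G.Adj u v) :
    (G.induce s).Connected := by
  refine (connected_iff_exists_forall_reachable _).2 ⟨⟨h, hh⟩, fun ⟨v, hv⟩ => ?_⟩
  obtain rfl | hadj | ⟨u, hu, hhu, huv⟩ := hr v hv
  · rfl
  · exact Adj.reachable (induce_adj.2 hadj)
  · exact (Adj.reachable (v := ⟨u, hu⟩) (induce_adj.2 hhu)).trans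
      (Adj.reachable (induce_adj.2 huv))

section CompleteBipartite

variable {α β κ : Type*} (c : α → κ) (g : β → Option κ)

def bipartiteLabel : α ⊕ β → κ ⊕ β :=
  Sum.elim (Sum.inl ∘ c) fun j => (g j).elim (Sum.inr j) Sum.inl

@[simp] theorem bipartiteLabel_inl (a : α) : bipartiteLabel c g (.inl a) = .inl (c a) := rfl

@[simp] theorem bipartiteLabel_inr_eq_inl {j : β} {k : κ} :
    bipartiteLabel c g (.inr j) = .inl k ↔ g j = some k := by
  cases h : g j <;> simp [bipartiteLabel, h]

@[simp] theorem bipartiteLabel_eq_inr {v : α ⊕ β} {j : β} :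
    bipartiteLabel c g v = .inr j ↔ v = .inr j ∧ g j = none := by
  rcases v with a | j'
  · simp [bipartiteLabel]
  · cases h : g j' <;> aesop (add simp bipartiteLabel)

def AdmissibleLabel : Prop :=
  ∀ a b, a ≠ b → c a = c b → ∃ j, g j = some (c a)

def IsLeftTrace (P : Finset (Finset (α ⊕ β))) : Prop :=
  ∀ a b, SameBlock P (.inl a) (.inl b) ↔ c a = c b

theorem connected_induce_fiber_bipartiteLabel (hc : Surjective c) (hg : AdmissibleLabel c g)
    (v : α ⊕ β) :
    ((completeBipartiteGraph α β).induce
      {w | bipartiteLabel c g w = bipartiteLabel c g v}).Connected := by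
  rcases hv : bipartiteLabel c g v with k | j
  · obtain ⟨a₀, rfl⟩ := hc k
    by_cases hk : ∃ j₀, g j₀ = some (c a₀)
    · obtain ⟨j₀, hj₀⟩ := hk
      refine connected_induce_of_hub (h := .inr j₀) (by simpa) ?_
      rintro (a | j) -
      · exact .inr (.inl (.inr ⟨rfl, rfl⟩))
      · exact .inr (.inr ⟨.inl a₀, rfl, .inr ⟨rfl, rfl⟩, .inl ⟨rfl, rfl⟩⟩)
    · refine connected_induce_of_hub (h := .inl a₀) rfl ?_
      rintro (a | j) hw
      · obtain rfl | hne := eq_or_ne a a₀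
        · exact .inl rfl
        · exact (hk (hg a₀ a hne.symm (Sum.inl_injective hw).symm)).elim
      · exact .inr (.inl (.inl ⟨rfl, rfl⟩))
  · obtain ⟨rfl, -⟩ := (bipartiteLabel_eq_inr c g).1 hv
    exact connected_induce_of_hub hv fun w hw => .inl ((bipartiteLabel_eq_inr c g).1 hw).1

theorem IsConnPartition.eq_of_sameBlock_of_forall_not_sameBlock_inl
    {P : Finset (Finset (α ⊕ β))} (hP : IsConnPartition (completeBipartiteGraph α β) P)
    {v w : α ⊕ β} (h : SameBlock P v w) (hv : ∀ a, ¬ SameBlock P v (.inl a)) : v = w := by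
  obtain ⟨B, hB, hvB, hwB⟩ := h
  by_contra hne
  obtain ⟨u, hu, hadj⟩ := exists_adj_of_connected_induce (hP.2 B hB) hvB hwB hne
  rcases v with a | j
  · exact hv a (hP.1.sameBlock_refl _)
  rcases u with a | j'
  · exact hv a ⟨B, hB, hvB, hu⟩
  · simp at hadj

variable [Fintype α] [DecidableEq α] [Fintype β] [DecidableEq β] [DecidableEq κ] {c g}

theorem fibers_bipartiteLabel_mem_connParts_iff (hc : Surjective c) :
    fibers (bipartiteLabel c g) ∈ connParts (completeBipartiteGraph α β) ↔
      AdmissibleLabel c g := by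
  rw [mem_connParts]
  refine ⟨fun hP a b hab hcab => ?_, fun hg => ⟨isPartition_fibers _, fun B hB => ?_⟩⟩
  · have hB := hP.2 _ (mem_image_of_mem _ (mem_univ (.inl a)))
    rw [coe_filter_univ] at hB
    obtain ⟨u, hu, hadj⟩ := exists_adj_of_connected_induce hB (v := .inl a) (w := .inl b)
      rfl (by simp [hcab]) (by simpa)
    rcases u with a' | j
    · simp at hadj
    · exact ⟨j, by simpa using hu⟩
  · obtain ⟨v, -, rfl⟩ := mem_image.1 hB
    rw [coe_filter_univ]
    exact connected_induce_fiber_bipartiteLabel c g hc hg v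

theorem IsConnPartition.exists_eq_fibers_bipartiteLabel {P : Finset (Finset (α ⊕ β))}
    (hP : IsConnPartition (completeBipartiteGraph α β) P) (hPc : IsLeftTrace c P) :
    ∃ g : β → Option κ, P = fibers (bipartiteLabel c g) := by
  classical
  let g j : Option κ :=
    if h : ∃ a, SameBlock P (.inr j) (.inl a) then some (c h.choose) else none
  have hl : ∀ v k,
      bipartiteLabel c g v = .inl k ↔ ∃ a, c a = k ∧ SameBlock P v (.inl a) := by
    rintro (a' | j) k
    · simp only [bipartiteLabel_inl, Sum.inl.injEq]
      refine ⟨?_, fun ⟨a, hak, ha⟩ => ((hPc a' a).1 ha).trans hak⟩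
      rintro rfl
      exact ⟨a', rfl, hP.1.sameBlock_refl _⟩
    · rw [bipartiteLabel_inr_eq_inl]
      simp only [g]
      split_ifs with h
      · refine ⟨fun hk => ⟨h.choose, Option.some_inj.1 hk, h.choose_spec⟩, ?_⟩
        rintro ⟨a, rfl, ha⟩
        exact congrArg some ((hPc _ _).1 (hP.1.sameBlock_trans h.choose_spec.symm ha))
      · exact iff_of_false (by simp) fun ⟨a, _, ha⟩ => h ⟨a, ha⟩
  refine ⟨g, hP.1.eq_fibers _ fun v w => ⟨fun h => ?_, fun h => ?_⟩⟩
  · by_cases hv : ∃ a, SameBlock P v (.inl a)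
    · obtain ⟨a, ha⟩ := hv
      rw [(hl v _).2 ⟨a, rfl, ha⟩, (hl w _).2 ⟨a, rfl, hP.1.sameBlock_trans h.symm ha⟩]
    · rw [hP.eq_of_sameBlock_of_forall_not_sameBlock_inl h (not_exists.1 hv)]
  · rcases hk : bipartiteLabel c g v with k | j
    · obtain ⟨a, rfl, ha⟩ := (hl v k).1 hk
      obtain ⟨b, hab, hb⟩ := (hl w _).1 (h ▸ hk)
      exact hP.1.sameBlock_trans ha (hP.1.sameBlock_trans ((hPc a b).2 hab.symm) hb.symm)
    · obtain ⟨rfl, -⟩ := (bipartiteLabel_eq_inr c g).1 hk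
      obtain ⟨rfl, -⟩ := (bipartiteLabel_eq_inr c g).1 (h ▸ hk)
      exact hP.1.sameBlock_refl _


theorem fibers_bipartiteLabel_injective (hc : Surjective c) :
    Injective fun g : β → Option κ => fibers (bipartiteLabel c g) := by
  intro g g' h
  funext j
  refine Option.ext fun k => ?_
  obtain ⟨a, rfl⟩ := hc k
  have := congrArg (SameBlock · (.inr j) (.inl a)) h
  simpa [sameBlock_fibers] using this

theorem card_fibers_bipartiteLabel [Fintype κ] (hc : Surjective c) :
    (fibers (bipartiteLabel c g)).card = Fintype.card κ + #{j | g j = none} := by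
  rw [card_fibers, ← card_univ, ← card_disjSum]
  congr 1
  ext (k | j)
  · simp [Sum.exists, hc k]
  · simp

open scoped Classical in
theorem sum_connParts_filter_isLeftTrace [Fintype κ] (hc : Surjective c) (x : ℤ) :
    ∑ P ∈ (connParts (completeBipartiteGraph α β)).filter (IsLeftTrace c), x ^ P.card =
      ∑ g ∈ (univ : Finset (β → Option κ)).filter (AdmissibleLabel c),
        x ^ (Fintype.card κ + #{j | g j = none}) := by
  have : (connParts (completeBipartiteGraph α β)).filter (IsLeftTrace c) =
      ((univ : Finset (β → Option κ)).filter (AdmissibleLabel c)).image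
        fun g => fibers (bipartiteLabel c g) := by
    ext P
    simp only [mem_filter, mem_image, mem_univ, true_and]
    constructor
    · rintro ⟨hP, hPc⟩
      obtain ⟨g, rfl⟩ := (mem_connParts.1 hP).exists_eq_fibers_bipartiteLabel hPc
      exact ⟨g, (fibers_bipartiteLabel_mem_connParts_iff hc).1 hP, rfl⟩
    · rintro ⟨g, hg, rfl⟩
      exact ⟨(fibers_bipartiteLabel_mem_connParts_iff hc).2 hg,
        fun a b => by simp [sameBlock_fibers]⟩
  rw [this, sum_image (fibers_bipartiteLabel_injective hc).injOn]
  exact sum_congr rfl fun g _ => by rw [card_fibers_bipartiteLabel hc]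

end CompleteBipartite

theorem sum_pow_card_filter_eq_none {β κ R : Type*} [Fintype β] [DecidableEq β] [Fintype κ]
    [CommSemiring R] (x : R) :
    ∑ g : β → Option κ, x ^ #{j | g j = none} = (x + Fintype.card κ) ^ Fintype.card β := by
  calc ∑ g : β → Option κ, x ^ #{j | g j = none}
      = ∑ g : β → Option κ, ∏ j, if g j = none then x else 1 := by
        refine sum_congr rfl fun g _ => ?_
        rw [prod_ite, prod_const, prod_const_one, mul_one]
    _ = ∏ _j : β, ∑ o : Option κ, if o = none then x else 1 :=
        (Fintype.prod_sum fun (_ : β) (o : Option κ) => if o = none then x else 1).symm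
    _ = _ := by
        rw [prod_const, card_univ, Fintype.sum_option]
        simp

theorem admissibleLabel_of_injective {α β κ : Type*} {c : α → κ} (hc : Injective c)
    (g : β → Option κ) : AdmissibleLabel c g :=
  fun _ _ hab hcab => absurd (hc hcab) hab

theorem admissibleLabel_const_iff {α β : Type*} [Nontrivial α] {g : β → Option Unit} :
    AdmissibleLabel (fun _ : α => ()) g ↔ g ≠ fun _ => none := by
  obtain ⟨a, b, hab⟩ := exists_pair_ne α
  refine ⟨fun h hg => ?_, fun hg _ _ _ _ => ?_⟩
  · obtain ⟨j, hj⟩ := h a b hab rfl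
    simp [hg] at hj
  · by_contra! hne
    exact hg (funext fun j => Option.eq_none_iff_forall_ne_some.2 fun _ => hne j)

theorem isLeftTrace_id_iff_not_isLeftTrace_const {β : Type*} {P : Finset (Finset (Fin 2 ⊕ β))}
    (hP : IsPartition P) : IsLeftTrace id P ↔ ¬ IsLeftTrace (fun _ : Fin 2 => ()) P := by
  have hsymm : SameBlock P (.inl 1) (.inl 0) ↔ SameBlock P (.inl 0) (.inl 1) :=
    ⟨SameBlock.symm, SameBlock.symm⟩
  simp [IsLeftTrace, Fin.forall_fin_two, hP.sameBlock_refl, hsymm]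

open scoped Classical in
theorem Q_completeBipartiteGraph_fin_one (t : ℕ) (x : ℤ) :
    Q (completeBipartiteGraph (Fin 1) (Fin t)) x = x * (1 + x) ^ t := by
  have htrace : (connParts (completeBipartiteGraph (Fin 1) (Fin t))).filter (IsLeftTrace id) =
      connParts (completeBipartiteGraph (Fin 1) (Fin t)) :=
    filter_true_of_mem fun P hP a b => by
      simp [Subsingleton.elim a b, (mem_connParts.1 hP).1.sameBlock_refl]
  rw [Q, ← htrace, sum_connParts_filter_isLeftTrace surjective_id,
    filter_true_of_mem fun g _ => admissibleLabel_of_injective injective_id g]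
  simp only [pow_add, ← mul_sum, sum_pow_card_filter_eq_none]
  simp [add_comm]

open scoped Classical in
theorem Q_completeBipartiteGraph_fin_two (t : ℕ) (x : ℤ) :
    Q (completeBipartiteGraph (Fin 2) (Fin t)) x =
      x * ((1 + x) ^ t - x ^ t) + x ^ 2 * (2 + x) ^ t := by
  have htrace : (connParts (completeBipartiteGraph (Fin 2) (Fin t))).filter
      (¬ IsLeftTrace (fun _ : Fin 2 => ()) ·) =
      (connParts (completeBipartiteGraph (Fin 2) (Fin t))).filter (IsLeftTrace id) :=
    filter_congr fun P hP => (isLeftTrace_id_iff_not_isLeftTrace_const (mem_connParts.1 hP).1).symm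
  have hadm : (univ : Finset (Fin t → Option Unit)).filter (AdmissibleLabel fun _ : Fin 2 => ()) =
      univ.erase fun _ => none := by
    rw [← filter_ne']
    exact filter_congr fun g _ => admissibleLabel_const_iff
  rw [Q, ← sum_filter_add_sum_filter_not _ (IsLeftTrace fun _ : Fin 2 => ()), htrace,
    sum_connParts_filter_isLeftTrace (surjective_to_subsingleton _),
    sum_connParts_filter_isLeftTrace surjective_id, hadm,
    filter_true_of_mem fun g _ => admissibleLabel_of_injective injective_id g,
    sum_erase_eq_sub (mem_univ _)]
  simp only [pow_add, ← mul_sum, sum_pow_card_filter_eq_none]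
  simp only [Fintype.card_unique, pow_one, Nat.cast_one, Fintype.card_fin, filter_true,
    card_univ, Nat.cast_ofNat, add_comm]
  ring

theorem completeBipartite_one_two_general (t : ℕ) (x : ℤ) :
    Q (completeBipartiteGraph (Fin 1) (Fin t)) x = x * (1 + x) ^ t ∧
    Q (completeBipartiteGraph (Fin 2) (Fin t)) x
      = x * ((1 + x) ^ t - x ^ t) + x ^ 2 * ((2 + x) ^ t - x ^ t) + x ^ (2 + t) := by
  refine ⟨Q_completeBipartiteGraph_fin_one t x, ?_⟩
  rw [Q_completeBipartiteGraph_fin_two, pow_add]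
  ring

/-- The partition polynomials of the stars `K_{1,t}` and of `K_{2,t}` for `t ≥ 1`. -/
theorem completeBipartite_one_two (t : ℕ) (ht : 1 ≤ t) (x : ℤ) :
    Q (completeBipartiteGraph (Fin 1) (Fin t)) x = x * (1 + x) ^ t ∧
    Q (completeBipartiteGraph (Fin 2) (Fin t)) x
      = x * ((1 + x) ^ t - x ^ t) + x ^ 2 * ((2 + x) ^ t - x ^ t) + x ^ (2 + t) :=
  completeBipartite_one_two_general t x
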